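/- arXiv:2009.00696 — 3 statements merged into one kernel-verified Lean document; each statement's English description precedes it below -/
import Mathlib

section
/- Let G ⊂ ℝⁿ be open, X ⊂ G compact, and F : G → Set ℝⁿ satisfy the Filippov conditions. Define Φ : ℝ≥0 × X → Set X by b ∈ Φ(T,a) iff there exists a solution x : [0,T] → X of ẋ ∈ F(x) with x(0)=a and x(T)=b. Then Φ satisfies the monoid properties: Φ(0,x) = {x} and Φ(t, Φ(s,x)) = Φ(t+s, x). -/
open Set MeasureTheory Filter Topology

namespace DIncl

variable {E : Type*} [NormedAddCommGroup E] [NormedSpace ℝ E] [CompleteSpace E]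

/-- Upper semicontinuity of a set-valued map on a set `D`. -/
def USCOn {α β : Type*} [PseudoMetricSpace α] [PseudoMetricSpace β]
    (F : α → Set β) (D : Set α) : Prop :=
  ∀ x ∈ D, ∀ ε > 0, ∃ δ > 0, ∀ y ∈ D, dist y x < δ →
    F y ⊆ {z | ∃ w ∈ F x, dist z w < ε}

/-- The Filippov conditions on `D`: upper semicontinuous with compact, convex,
nonempty values. -/
def FilippovOn {α : Type*} [PseudoMetricSpace α] (F : α → Set E) (D : Set α) : Prop :=
  USCOn F D ∧ ∀ x ∈ D, IsCompact (F x) ∧ Convex ℝ (F x) ∧ (F x).Nonempty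

/-- `x` is a solution of the differential inclusion `ẋ ∈ F x` on the set `I`,
staying in `X`: an absolutely continuous function whose a.e. derivative lies in
`F (x t)`, encoded via the integral representation `x b = x a + ∫_a^b v`. -/
def IsSolOn (F : E → Set E) (X : Set E) (x : ℝ → E) (I : Set ℝ) : Prop :=
  (∀ t ∈ I, x t ∈ X) ∧
  ∃ v : ℝ → E,
    (∀ a ∈ I, ∀ b ∈ I, IntervalIntegrable v volume a b) ∧
    (∀ᵐ t ∂volume, t ∈ I → v t ∈ F (x t)) ∧
    (∀ a ∈ I, ∀ b ∈ I, x b = x a + ∫ t in a..b, v t)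

/-- The solution multiflow `Φ(T,a)` of `ẋ ∈ F x` in `X`. -/
def mflow (F : E → Set E) (X : Set E) (T : ℝ) (a : E) : Set E :=
  {b | ∃ x : ℝ → E, IsSolOn F X x (Icc 0 T) ∧ x 0 = a ∧ x T = b}

/-- `Φ(I,U)`. -/
def mflowSet (F : E → Set E) (X : Set E) (I : Set ℝ) (U : Set E) : Set E :=
  ⋃ t ∈ I, ⋃ a ∈ U, mflow F X t a

/-- Maximal invariant subset of `U`: points admitting a full-time orbit in `U`. -/
def maxInv (F : E → Set E) (U : Set E) : Set E :=
  {x | ∃ ψ : ℝ → E, IsSolOn F U ψ univ ∧ ψ 0 = x}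

/-- `S` is invariant: every point of `S` has a full-time orbit staying in `S`. -/
def IsInvSet (F : E → Set E) (S : Set E) : Prop := S ⊆ maxInv F S

/-- The restricted omega-limit set `ω_S(U)` (with `Φ^S = mflow F S`). -/
def omegaS (F : E → Set E) (S U : Set E) : Set E :=
  ⋂ t ∈ Ici (0:ℝ), closure (mflowSet F S (Ici t) U)

/-- `(Φ^S)^*(I,U)` for the dual (backward-time) multiflow. -/
def mflowDualSet (F : E → Set E) (S : Set E) (I : Set ℝ) (U : Set E) : Set E :=
  ⋃ t ∈ I, ⋃ a ∈ U, {b | a ∈ mflow F S (-t) b}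

/-- The restricted alpha-limit set `α_S(U)`. -/
def alphaS (F : E → Set E) (S U : Set E) : Set E :=
  ⋂ t ∈ Iio (0:ℝ), closure (mflowDualSet F S (Iic t) U)

/-- The interior of `U` relative to `X`. -/
def relInt (X U : Set E) : Set E := {x ∈ X | U ∈ nhdsWithin x X}

/-- The closure of `U` relative to `X`. -/
def relCl (X U : Set E) : Set E := closure U ∩ X

/-- `A` is an attractor in `S`: the `ω_S`-limit set of a neighborhood of itself in `S`. -/
def IsAttractorIn (F : E → Set E) (S A : Set E) : Prop :=
  A ⊆ S ∧ ∃ U, A ⊆ relInt S U ∧ U ⊆ S ∧ omegaS F S U = A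

/-- `R` is a repeller in `S`: the `α_S`-limit set of a neighborhood of itself in `S`. -/
def IsRepellerIn (F : E → Set E) (S R : Set E) : Prop :=
  R ⊆ S ∧ ∃ U, R ⊆ relInt S U ∧ U ⊆ S ∧ alphaS F S U = R

/-- The dual repeller of an attractor `A` in `S`. -/
def dualRep (F : E → Set E) (S A : Set E) : Set E :=
  {x ∈ S | ¬ omegaS F S {x} ⊆ A}

/-- The dual attractor of a repeller `R` in `S`. -/
def dualAtt (F : E → Set E) (S R : Set E) : Set E :=
  {x ∈ S | ¬ alphaS F S {x} ⊆ R}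

end DIncl

open DIncl Set MeasureTheory Filter Topology

/-! Concatenating a solution on `[0, s]` with a time-shifted solution on `[0, t]` gives a
solution on `[0, t + s]` (its velocity is the concatenation of the two velocities), and
conversely a solution on `[0, t + s]` splits at time `s` into two such pieces. -/

namespace DIncl

variable {E : Type*} [NormedAddCommGroup E] [NormedSpace ℝ E] {F : E → Set E} {X : Set E}
  {x y : ℝ → E} {I J : Set ℝ}

theorem IsSolOn.mono (h : IsSolOn F X x J) (hIJ : I ⊆ J) : IsSolOn F X x I := by
  obtain ⟨hmem, v, hint, hae, heq⟩ := h
  exact ⟨fun u hu => hmem u (hIJ hu), v, fun a ha b hb => hint a (hIJ ha) b (hIJ hb),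
    hae.mono fun u hu hI => hu (hIJ hI), fun a ha b hb => heq a (hIJ ha) b (hIJ hb)⟩

theorem IsSolOn.congr (h : IsSolOn F X x I) (hxy : EqOn x y I) : IsSolOn F X y I := by
  obtain ⟨hmem, v, hint, hae, heq⟩ := h
  refine ⟨fun u hu => hxy hu ▸ hmem u hu, v, hint, ?_, fun a ha b hb => ?_⟩
  · filter_upwards [hae] with u hu hI
    exact hxy hI ▸ hu hI
  · rw [← hxy ha, ← hxy hb]
    exact heq a ha b hb

theorem isSolOn_singleton {t : ℝ} (hx : x t ∈ X) : IsSolOn F X x {t} := by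
  refine ⟨fun u hu => hu ▸ hx, 0, fun _ _ _ _ => intervalIntegrable_const, ?_, ?_⟩
  · filter_upwards [compl_mem_ae_iff.2 (measure_singleton t)] with u hu hut
    exact absurd hut hu
  · rintro a rfl b rfl
    simp

theorem IsSolOn.comp_add_right (h : IsSolOn F X x I) (s : ℝ) :
    IsSolOn F X (fun u => x (u + s)) ((· + s) ⁻¹' I) := by
  obtain ⟨hmem, v, hint, hae, heq⟩ := h
  refine ⟨fun u hu => hmem _ hu, fun u => v (u + s), fun a ha b hb => ?_, ?_,
    fun a ha b hb => ?_⟩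
  · simpa using (hint _ ha _ hb).comp_add_right s
  · filter_upwards [(measurePreserving_add_right volume s).quasiMeasurePreserving.tendsto_ae.eventually
      hae] with u hu hI
    exact hu hI
  · rw [intervalIntegral.integral_comp_add_right]
    exact heq _ ha _ hb

theorem IsSolOn.union_Icc {a b c : ℝ} (hab : a ≤ b) (hbc : b ≤ c)
    (h₁ : IsSolOn F X x (Icc a b)) (h₂ : IsSolOn F X x (Icc b c)) :
    IsSolOn F X x (Icc a c) := by
  obtain ⟨hmem₁, v₁, hint₁, hae₁, heq₁⟩ := h₁
  obtain ⟨hmem₂, v₂, hint₂, hae₂, heq₂⟩ := h₂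
  set v : ℝ → E := fun u => if u ≤ b then v₁ u else v₂ u
  have hb₁ : b ∈ Icc a b := ⟨hab, le_rfl⟩
  have hb₂ : b ∈ Icc b c := ⟨le_rfl, hbc⟩
  have from_b : ∀ p ∈ Icc a c,
      IntervalIntegrable v volume b p ∧ x p = x b + ∫ u in b..p, v u := by
    have transfer : ∀ {w : ℝ → E} {p : ℝ}, EqOn w v (uIoc b p) →
        IntervalIntegrable w volume b p → x p = x b + ∫ u in b..p, w u →
        IntervalIntegrable v volume b p ∧ x p = x b + ∫ u in b..p, v u :=
      fun hwv hint heq => ⟨hint.congr hwv, by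
        rw [heq, intervalIntegral.integral_congr_ae (.of_forall fun u hu => hwv hu)]⟩
    intro p hp
    rcases le_total p b with hpb | hbp
    · have hp₁ : p ∈ Icc a b := ⟨hp.1, hpb⟩
      refine transfer (fun u hu => ?_) (hint₁ b hb₁ p hp₁) (heq₁ b hb₁ p hp₁)
      rw [uIoc_of_ge hpb] at hu
      simp [v, hu.2]
    · have hp₂ : p ∈ Icc b c := ⟨hbp, hp.2⟩
      refine transfer (fun u hu => ?_) (hint₂ b hb₂ p hp₂) (heq₂ b hb₂ p hp₂)
      rw [uIoc_of_le hbp] at hu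
      simp [v, not_le.2 hu.1]
  refine ⟨fun u hu => ?_, v, fun p hp q hq => (from_b p hp).1.symm.trans (from_b q hq).1, ?_,
    fun p hp q hq => ?_⟩
  · rcases le_total u b with hub | hbu
    exacts [hmem₁ u ⟨hu.1, hub⟩, hmem₂ u ⟨hbu, hu.2⟩]
  · filter_upwards [hae₁, hae₂] with u hu₁ hu₂ hu
    by_cases hub : u ≤ b
    · simpa [v, hub] using hu₁ ⟨hu.1, hub⟩
    · simpa [v, hub] using hu₂ ⟨(not_le.1 hub).le, hu.2⟩
  · obtain ⟨hpint, hpeq⟩ := from_b p hp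
    obtain ⟨hqint, hqeq⟩ := from_b q hq
    rw [← intervalIntegral.integral_interval_sub_left hqint hpint, hpeq, hqeq]
    abel

theorem mflow_zero {a : E} (ha : a ∈ X) : mflow F X 0 a = {a} := by
  ext b
  constructor
  · rintro ⟨x, -, hx0, hxb⟩
    exact hxb ▸ hx0
  · rintro rfl
    exact ⟨fun _ => b, Icc_self (0 : ℝ) ▸ isSolOn_singleton ha, rfl, rfl⟩

theorem mem_mflow_add {s t : ℝ} {a b c : E} (hs : 0 ≤ s) (ht : 0 ≤ t)
    (hc : c ∈ mflow F X s a) (hb : b ∈ mflow F X t c) : b ∈ mflow F X (t + s) a := by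
  obtain ⟨x, hx, hx0, hxs⟩ := hc
  obtain ⟨y, hy, hy0, hyt⟩ := hb
  set z : ℝ → E := fun u => if u ≤ s then x u else y (u - s)
  have hz_left : IsSolOn F X z (Icc 0 s) := hx.congr fun u hu => by simp [z, hu.2]
  have hyz : EqOn (fun u => y (u + -s)) z (Icc s (t + s)) := by
    intro u hu
    rcases hu.1.eq_or_lt with rfl | hsu
    · simp [z, hy0, hxs]
    · simp [z, not_le.2 hsu, sub_eq_add_neg]
  have hz_right : IsSolOn F X z (Icc s (t + s)) := by
    have hy_shift := hy.comp_add_right (-s)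
    rw [preimage_add_const_Icc, zero_sub, neg_neg, sub_neg_eq_add] at hy_shift
    exact hy_shift.congr hyz
  refine ⟨z, hz_left.union_Icc hs (by linarith) hz_right, by simp [z, hs, hx0], ?_⟩
  rw [← hyz ⟨by linarith, le_rfl⟩]
  simpa using hyt

theorem exists_mem_mflow_of_mem_mflow_add {s t : ℝ} {a b : E} (hs : 0 ≤ s) (ht : 0 ≤ t)
    (hb : b ∈ mflow F X (t + s) a) : ∃ c ∈ mflow F X s a, b ∈ mflow F X t c := by
  obtain ⟨x, hx, hx0, hxb⟩ := hb
  refine ⟨x s, ⟨x, hx.mono (Icc_subset_Icc le_rfl (by linarith)), hx0, rfl⟩,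
    fun u => x (u + s), (hx.comp_add_right s).mono fun u hu => ?_, by simp, by simpa using hxb⟩
  exact ⟨by linarith [hu.1], by linarith [hu.2]⟩

end DIncl

theorem solution_multiflow_monoid_general {n : ℕ} (X : Set (Fin n → ℝ))
    (F : (Fin n → ℝ) → Set (Fin n → ℝ)) :
    (∀ x ∈ X, mflow F X 0 x = {x}) ∧
    (∀ s ≥ (0:ℝ), ∀ t ≥ (0:ℝ), ∀ x ∈ X,
      (⋃ y ∈ mflow F X s x, mflow F X t y) = mflow F X (t + s) x) := by
  refine ⟨fun x hx => mflow_zero hx, fun s hs t ht x _ => ?_⟩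
  ext b
  simp only [mem_iUnion, exists_prop]
  exact ⟨fun ⟨c, hc, hb⟩ => mem_mflow_add hs ht hc hb, exists_mem_mflow_of_mem_mflow_add hs ht⟩

/-- The solution multiflow satisfies the monoid properties. -/
theorem solution_multiflow_monoid {n : ℕ} (G X : Set (Fin n → ℝ)) (hG : IsOpen G)
    (hXG : X ⊆ G) (hX : IsCompact X)
    (F : (Fin n → ℝ) → Set (Fin n → ℝ)) (hF : FilippovOn F G) :
    (∀ x ∈ X, mflow F X 0 x = {x}) ∧
    (∀ s ≥ (0:ℝ), ∀ t ≥ (0:ℝ), ∀ x ∈ X,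
      (⋃ y ∈ mflow F X s x, mflow F X t y) = mflow F X (t + s) x) :=
  solution_multiflow_monoid_general X F
end

section
/- Let G ⊂ ℝⁿ be open, X ⊂ G compact, and F : G → Set ℝⁿ satisfy the Filippov conditions. The solution multiflow Φ defined by b ∈ Φ(T,a) iff there is a solution x : [0,T] → X of ẋ ∈ F(x) with x(0)=a, x(T)=b, is compact-valued: Φ(T,a) is a compact (possibly empty) subset of X for every T ≥ 0 and a ∈ X. -/
open Set MeasureTheory Filter Topology

open DIncl Set MeasureTheory Filter Topology

/-!
Solutions staying in the compact set `X` have velocities bounded by a uniform bound of `F` on `X`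
(upper semicontinuity plus compact values), so they are uniformly Lipschitz. Given endpoints
`xₖ(T) → p`, Arzelà–Ascoli yields a subsequence converging to a Lipschitz `y`. For `s` slightly
larger than `t`, the slope of `xₖ` on `[t, s]` is an average of velocities taken near `y t`, so by
upper semicontinuity it lies in the closed convex `ε`-thickening of `F (y t)`; letting `k → ∞` and
then `s → t` puts `y' t` in `F (y t)` wherever `y` is differentiable, i.e. almost everywhere by
Rademacher's theorem. Hence `y` is a solution from `a` to `p`.
-/

open scoped NNReal BoundedContinuousFunction

theorem exists_lipschitzWith_tendsto_subseq {E : Type*} [MetricSpace E] {X : Set E}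
    (hX : IsCompact X) {K : ℝ≥0} {T : ℝ} (hT : 0 ≤ T) {xs : ℕ → ℝ → E}
    (hxsX : ∀ k, ∀ t ∈ Icc 0 T, xs k t ∈ X) (hxsK : ∀ k, LipschitzOnWith K (xs k) (Icc 0 T)) :
    ∃ y : ℝ → E, LipschitzWith K y ∧ ∃ φ : ℕ → ℕ, StrictMono φ ∧
      ∀ t ∈ Icc 0 T, Tendsto (fun k => xs (φ k) t) atTop (𝓝 (y t)) := by
  have : CompactSpace (Icc 0 T) := isCompact_iff_compactSpace.1 isCompact_Icc
  set A : Set (Icc 0 T →ᵇ E) := (⇑) ⁻¹' ({f | LipschitzWith K f} ∩ univ.pi fun _ => X)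
  have hA : IsCompact A := BoundedContinuousFunction.arzela_ascoli₂ X hX A
    (((isClosed_setOfPred_lipschitzWith K).inter (isClosed_set_pi fun _ _ => hX.isClosed)).preimage
      BoundedContinuousFunction.continuous_coe)
    (fun f q hf => hf.2 q trivial)
    (LipschitzWith.uniformEquicontinuous _ K fun f => f.2.1).equicontinuous
  let fs (k : ℕ) : Icc 0 T →ᵇ E :=
    .mkOfCompact ⟨(Icc 0 T).domRestrict (xs k), (hxsK k).continuousOn.domRestrict⟩
  have hfs : ∀ k, fs k ∈ A := fun k => ⟨(hxsK k).to_restrict, fun q _ => hxsX k q q.2⟩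
  obtain ⟨f, hfA, φ, hφ, hlim⟩ := hA.tendsto_subseq hfs
  refine ⟨IccExtend hT f, mul_one K ▸ hfA.1.comp (LipschitzWith.projIcc hT), φ, hφ,
    fun t ht => ?_⟩
  rw [IccExtend_of_mem hT f ht]
  exact ((continuous_eval_const ⟨t, ht⟩).tendsto f).comp hlim

section FTC

variable {E : Type*} [NormedAddCommGroup E] [NormedSpace ℝ E]

theorem LipschitzWith.intervalIntegrable_deriv [CompleteSpace E] {K : ℝ≥0} {y : ℝ → E}
    (hy : LipschitzWith K y) (a b : ℝ) : IntervalIntegrable (deriv y) volume a b :=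
  (intervalIntegrable_const (c := (K : ℝ))).mono_fun
    (stronglyMeasurable_deriv y).aestronglyMeasurable
    (Eventually.of_forall fun _ => (norm_deriv_le_of_lipschitz hy).trans (le_abs_self (K : ℝ)))

theorem LipschitzWith.integral_deriv_eq_sub [FiniteDimensional ℝ E] {K : ℝ≥0} {y : ℝ → E}
    (hy : LipschitzWith K y) (a b : ℝ) : ∫ t in a..b, deriv y t = y b - y a := by
  have := FiniteDimensional.complete ℝ E
  refine (SeparatingDual.eq_iff_forall_dual_eq (R := ℝ)).2 fun g => ?_
  have hgy : LipschitzWith (‖g‖₊ * K) (g ∘ y) := g.lipschitz.comp hy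
  have hderiv : ∀ᵐ t, t ∈ uIoc a b → g (deriv y t) = deriv (g ∘ y) t := by
    filter_upwards [hy.ae_differentiableAt] with t ht _
    exact ((g.hasFDerivAt.comp_hasDerivAt t ht.hasDerivAt).deriv).symm
  rw [← g.intervalIntegral_comp_comm (hy.intervalIntegrable_deriv a b),
    intervalIntegral.integral_congr_ae hderiv, map_sub,
    (hgy.lipschitzOnWith (s := uIcc a b)).absolutelyContinuousOnInterval.integral_deriv_eq_sub]
  rfl

end FTC

namespace DIncl

open Metric intervalIntegral

theorem USCOn.exists_norm_le {α E : Type*} [PseudoMetricSpace α] [SeminormedAddCommGroup E]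
    {F : α → Set E} {G X : Set α} (hF : USCOn F G) (hXG : X ⊆ G)
    (hX : IsCompact X) (hFX : ∀ x ∈ X, Bornology.IsBounded (F x)) :
    ∃ M, ∀ x ∈ X, ∀ z ∈ F x, ‖z‖ ≤ M := by
  refine hX.induction_on (p := fun s => ∃ M, ∀ x ∈ s, ∀ z ∈ F x, ‖z‖ ≤ M) ⟨0, by simp⟩
    (fun s t hst ⟨M, hM⟩ => ⟨M, fun x hx => hM x (hst hx)⟩)
    (fun s t ⟨M, hM⟩ ⟨N, hN⟩ => ⟨max M N, fun x hx z hz => hx.elim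
      (fun hx => (hM x hx z hz).trans (le_max_left _ _))
      (fun hx => (hN x hx z hz).trans (le_max_right _ _))⟩) fun x hx => ?_
  obtain ⟨R, hR⟩ := isBounded_iff_forall_norm_le.1 (hFX x hx)
  obtain ⟨δ, hδ, hFδ⟩ := hF x (hXG hx) 1 one_pos
  refine ⟨X ∩ ball x δ, inter_mem_nhdsWithin X (ball_mem_nhds x hδ), R + 1, ?_⟩
  rintro y ⟨hyX, hyx⟩ z hz
  obtain ⟨w, hw, hzw⟩ := hFδ y (hXG hyX) hyx hz
  calc ‖z‖ ≤ ‖w‖ + dist z w := dist_eq_norm z w ▸ norm_le_norm_add_norm_sub' z w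
    _ ≤ R + 1 := add_le_add (hR w hw) hzw.le

section Solutions

variable {E : Type*} [NormedAddCommGroup E] [NormedSpace ℝ E] {F : E → Set E} {X : Set E}

theorem mflow_subset {T : ℝ} (hT : 0 ≤ T) (a : E) : mflow F X T a ⊆ X := by
  rintro b ⟨x, ⟨hxX, -⟩, -, rfl⟩
  exact hxX T (right_mem_Icc.2 hT)

theorem IsSolOn.lipschitzOnWith {x : ℝ → E} {I : Set ℝ} (hx : IsSolOn F X x I)
    (hI : I.OrdConnected) {K : ℝ≥0} (hK : ∀ p ∈ X, ∀ z ∈ F p, ‖z‖ ≤ K) :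
    LipschitzOnWith K x I := by
  obtain ⟨hxX, v, -, hvF, hxv⟩ := hx
  refine LipschitzOnWith.of_dist_le_mul fun u hu s hs => ?_
  have hv : ∀ᵐ τ, τ ∈ uIoc s u → ‖v τ‖ ≤ K := by
    filter_upwards [hvF] with τ hτ hτsu
    have hτI : τ ∈ I := hI.uIcc_subset hs hu (uIoc_subset_uIcc hτsu)
    exact hK _ (hxX τ hτI) _ (hτ hτI)
  calc dist (x u) (x s) = ‖∫ τ in s..u, v τ‖ := by
        rw [hxv s hs u hu, dist_eq_norm, add_sub_cancel_left]
    _ ≤ K * |u - s| := norm_integral_le_of_norm_le_const_ae hv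
    _ = K * dist u s := by rw [Real.dist_eq]

variable [CompleteSpace E]

theorem IsSolOn.slope_mem {x : ℝ → E} {I : Set ℝ} (hx : IsSolOn F X x I) {s u : ℝ}
    (hsu : s < u) (hsuI : Icc s u ⊆ I) {S : Set E} (hS : Convex ℝ S) (hSc : IsClosed S)
    (hFS : ∀ τ ∈ Ioc s u, F (x τ) ⊆ S) : slope x s u ∈ S := by
  obtain ⟨-, v, hvi, hvF, hxv⟩ := hx
  have hs : s ∈ I := hsuI (left_mem_Icc.2 hsu.le)
  have hu : u ∈ I := hsuI (right_mem_Icc.2 hsu.le)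
  have hvol : volume (Ioc s u) = ENNReal.ofReal (u - s) := Real.volume_Ioc
  have hmem : ∀ᵐ τ ∂volume.restrict (Ioc s u), v τ ∈ S := by
    rw [ae_restrict_iff' measurableSet_Ioc]
    filter_upwards [hvF] with τ hτ hτsu
    exact hFS τ hτsu (hτ (hsuI (Ioc_subset_Icc_self hτsu)))
  have hint : IntegrableOn v (Ioc s u) :=
    (intervalIntegrable_iff_integrableOn_Ioc_of_le hsu.le).1 (hvi s hs u hu)
  have havg := hS.set_average_mem hSc (by simp [hvol, hsu]) (by simp [hvol]) hmem hint
  rwa [setAverage_eq, measureReal_def, hvol, ENNReal.toReal_ofReal (sub_nonneg.2 hsu.le),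
    ← integral_of_le hsu.le, ← add_sub_cancel_left (x s) (∫ τ in s..u, v τ), ← hxv s hs u hu,
    ← slope_def_module] at havg

variable {ι : Type*} {l : Filter ι} [l.NeBot] {G : Set E} {K : ℝ≥0} {T : ℝ}
  {xs : ι → ℝ → E} {y : ℝ → E}

theorem eventually_slope_mem_cthickening (hF : USCOn F G) (hXG : X ⊆ G)
    (hK : ∀ p ∈ X, ∀ z ∈ F p, ‖z‖ ≤ K) (hxs : ∀ i, IsSolOn F X (xs i) (Icc 0 T))
    (hlim : ∀ t ∈ Icc 0 T, Tendsto (fun i => xs i t) l (𝓝 (y t)))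
    {t : ℝ} (ht : t ∈ Ico 0 T) (hyt : y t ∈ G) (hconv : Convex ℝ (F (y t))) {ε : ℝ}
    (hε : 0 < ε) : ∀ᶠ s in 𝓝[>] t, slope y t s ∈ cthickening ε (F (y t)) := by
  obtain ⟨δ, hδ, hFδ⟩ := hF (y t) hyt ε hε
  have hsmall : ∀ᶠ s in 𝓝 t, s < T ∧ K * (s - t) < δ / 2 := by
    refine (eventually_lt_nhds ht.2).and ?_
    have : Tendsto (fun s => K * (s - t)) (𝓝 t) (𝓝 (K * (t - t))) :=
      (continuous_const.mul (continuous_id.sub continuous_const)).tendsto t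
    exact this.eventually (gt_mem_nhds (by simpa using half_pos hδ))
  filter_upwards [nhdsWithin_le_nhds hsmall, self_mem_nhdsWithin] with s ⟨hsT, hsδ⟩ hts
  have hIcc : Icc t s ⊆ Icc 0 T := Icc_subset_Icc ht.1 hsT.le
  have ht' : t ∈ Icc 0 T := hIcc (left_mem_Icc.2 hts.le)
  have hslope : Tendsto (fun i => slope (xs i) t s) l (𝓝 (slope y t s)) := by
    simp only [slope_def_module]
    exact ((hlim s (hIcc (right_mem_Icc.2 hts.le))).sub (hlim t ht')).const_smul _
  refine isClosed_cthickening.mem_of_tendsto hslope ?_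
  filter_upwards [(hlim t ht').eventually (ball_mem_nhds (y t) (half_pos hδ))] with i hi
  refine (hxs i).slope_mem hts hIcc (hconv.cthickening ε) isClosed_cthickening fun τ hτ => ?_
  have hτ' : τ ∈ Icc 0 T := hIcc (Ioc_subset_Icc_self hτ)
  have hdist : dist (xs i τ) (y t) < δ := calc
    dist (xs i τ) (y t) ≤ dist (xs i τ) (xs i t) + dist (xs i t) (y t) := dist_triangle _ _ _
    _ ≤ K * dist τ t + dist (xs i t) (y t) := by
      gcongr
      exact ((hxs i).lipschitzOnWith ordConnected_Icc hK).dist_le_mul τ hτ' t ht'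
    _ < δ / 2 + δ / 2 := by
      refine add_lt_add_of_le_of_lt (le_trans ?_ hsδ.le) hi
      rw [Real.dist_eq, abs_of_pos (sub_pos.2 hτ.1)]
      gcongr
      exact hτ.2
    _ = δ := add_halves δ
  exact (hFδ _ (hXG ((hxs i).1 τ hτ')) hdist).trans fun z ⟨w, hw, hzw⟩ =>
    mem_cthickening_of_dist_le z w ε _ hw hzw.le

theorem deriv_mem_of_tendsto (hF : FilippovOn F G) (hXG : X ⊆ G)
    (hK : ∀ p ∈ X, ∀ z ∈ F p, ‖z‖ ≤ K) (hxs : ∀ i, IsSolOn F X (xs i) (Icc 0 T))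
    (hlim : ∀ t ∈ Icc 0 T, Tendsto (fun i => xs i t) l (𝓝 (y t)))
    {t : ℝ} (ht : t ∈ Ico 0 T) (hyt : y t ∈ G) (hdiff : DifferentiableAt ℝ y t) :
    deriv y t ∈ F (y t) := by
  obtain ⟨hcomp, hconv, -⟩ := hF.2 (y t) hyt
  rw [← hcomp.isClosed.closure_eq, closure_eq_iInter_cthickening]
  refine mem_iInter₂.2 fun ε hε => isClosed_cthickening.mem_of_tendsto ?_
    (eventually_slope_mem_cthickening hF.1 hXG hK hxs hlim ht hyt hconv hε)
  exact (hasDerivAt_iff_tendsto_slope.1 hdiff.hasDerivAt).mono_left (nhdsGT_le_nhdsNE t)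

theorem isSolOn_of_tendsto [FiniteDimensional ℝ E] (hF : FilippovOn F G) (hXG : X ⊆ G)
    (hX : IsClosed X) (hK : ∀ p ∈ X, ∀ z ∈ F p, ‖z‖ ≤ K)
    (hxs : ∀ i, IsSolOn F X (xs i) (Icc 0 T))
    (hlim : ∀ t ∈ Icc 0 T, Tendsto (fun i => xs i t) l (𝓝 (y t)))
    {L : ℝ≥0} (hy : LipschitzWith L y) : IsSolOn F X y (Icc 0 T) := by
  have hyX : ∀ t ∈ Icc 0 T, y t ∈ X := fun t ht =>
    hX.mem_of_tendsto (hlim t ht) (Eventually.of_forall fun i => (hxs i).1 t ht)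
  refine ⟨hyX, deriv y, fun a _ b _ => hy.intervalIntegrable_deriv a b, ?_, fun a _ b _ => ?_⟩
  · -- `deriv_mem_of_tendsto` works with right slopes, which are unavailable at `T`
    have hT : ∀ᵐ t : ℝ, t ≠ T := compl_mem_ae_iff.2 (measure_singleton T)
    filter_upwards [hy.ae_differentiableAt, hT] with t hdiff htT ht
    exact deriv_mem_of_tendsto hF hXG hK hxs hlim ⟨ht.1, ht.2.lt_of_ne htT⟩ (hXG (hyX t ht)) hdiff
  · rw [hy.integral_deriv_eq_sub, add_sub_cancel]

end Solutions

end DIncl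

theorem solution_multiflow_compact_valued_general {n : ℕ} (G X : Set (Fin n → ℝ))
    (hXG : X ⊆ G) (hX : IsCompact X)
    (F : (Fin n → ℝ) → Set (Fin n → ℝ)) (hF : FilippovOn F G)
    (T : ℝ) (hT : 0 ≤ T) (a : Fin n → ℝ) :
    IsCompact (mflow F X T a) := by
  obtain ⟨M, hM⟩ := hF.1.exists_norm_le hXG hX fun x hx => (hF.2 x (hXG hx)).1.isBounded
  have hK : ∀ p ∈ X, ∀ z ∈ F p, ‖z‖ ≤ M.toNNReal := fun p hp z hz =>
    (hM p hp z hz).trans (Real.le_coe_toNNReal M)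
  refine hX.of_isClosed_subset (isSeqClosed_iff_isClosed.1 fun b p hb hbp => ?_)
    (mflow_subset hT a)
  choose xs hxs hx0 hxT using hb
  obtain ⟨y, hy, φ, hφ, hlim⟩ := exists_lipschitzWith_tendsto_subseq hX hT (fun k => (hxs k).1)
    fun k => (hxs k).lipschitzOnWith ordConnected_Icc hK
  refine ⟨y, isSolOn_of_tendsto hF hXG hX.isClosed hK (fun k => hxs (φ k)) hlim hy, ?_, ?_⟩
  · exact tendsto_nhds_unique (hlim 0 (left_mem_Icc.2 hT)) (by simp [hx0])
  · exact tendsto_nhds_unique (hlim T (right_mem_Icc.2 hT))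
      (by simpa [hxT, Function.comp_def] using hbp.comp hφ.tendsto_atTop)

/-- The solution multiflow is compact-valued. -/
theorem solution_multiflow_compact_valued {n : ℕ} (G X : Set (Fin n → ℝ)) (hG : IsOpen G)
    (hXG : X ⊆ G) (hX : IsCompact X)
    (F : (Fin n → ℝ) → Set (Fin n → ℝ)) (hF : FilippovOn F G)
    (T : ℝ) (hT : 0 ≤ T) (a : Fin n → ℝ) (ha : a ∈ X) :
    IsCompact (mflow F X T a) :=
  solution_multiflow_compact_valued_general G X hXG hX F hF T hT a
end

section
/- Let S be a compact invariant set for the multiflow Φ of a differential inclusion, let A be an attractor in S with ω_S(U) = A for a neighborhood U of A in S. Then there exists t* > 0 such that cl(Φ^S([t*,∞), U)) ⊂ U. -/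
/-!
The sets `K t = cl Φ^S([t,∞), U)`, `t > 0`, form a directed family of compact subsets of `S`
whose intersection is `ω_S(U) = A`. Since `U` is a neighbourhood of every point of `A` relative
to `S`, the set `{y | y ∈ S → y ∈ U}` is a genuine neighbourhood of `A`, so by compactness one
`K t*` already lies in it; as `K t* ⊆ S`, this means `K t* ⊆ U`.
-/

open Set MeasureTheory Filter Topology

open DIncl Set MeasureTheory Filter Topology

namespace DIncl

variable {E : Type*} [NormedAddCommGroup E] [NormedSpace ℝ E]

theorem mflowSet_subset {F : E → Set E} {X : Set E} {I : Set ℝ} (hI : I ⊆ Ici 0) (U : Set E) :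
    mflowSet F X I U ⊆ X := by
  simp only [mflowSet, iUnion_subset_iff]
  rintro t ht a - b ⟨x, hx, -, rfl⟩
  exact hx.1 t ⟨hI ht, le_rfl⟩

theorem mflowSet_Ici_antitone (F : E → Set E) (X U : Set E) :
    Antitone fun t : ℝ => mflowSet F X (Ici t) U := fun _ _ hst =>
  biUnion_subset_biUnion_left (Ici_subset_Ici.2 hst)

theorem isCompact_closure_mflowSet {F : E → Set E} {S : Set E} (hS : IsCompact S) {t : ℝ}
    (ht : 0 ≤ t) (U : Set E) : IsCompact (closure (mflowSet F S (Ici t) U)) :=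
  hS.closure_of_subset (mflowSet_subset (Ici_subset_Ici.2 ht) U)

theorem iInter_closure_mflowSet_subset_omegaS (F : E → Set E) (S U : Set E) :
    ⋂ t : Ioi (0 : ℝ), closure (mflowSet F S (Ici t) U) ⊆ omegaS F S U := by
  refine subset_iInter₂ fun t (ht : 0 ≤ t) => ?_
  refine (iInter_subset _ ⟨t + 1, by simp only [mem_Ioi]; linarith⟩).trans ?_
  exact closure_mono (mflowSet_Ici_antitone F S U (by linarith))

theorem exists_closure_mflowSet_subset_of_mem_nhds {F : E → Set E} {S U W : Set E}
    (hS : IsCompact S) (hW : ∀ x ∈ omegaS F S U, W ∈ 𝓝 x) :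
    ∃ t > (0 : ℝ), closure (mflowSet F S (Ici t) U) ⊆ W := by
  have hdir : Directed (· ⊇ ·) fun t : Ioi (0 : ℝ) => closure (mflowSet F S (Ici t) U) :=
    fun s t => ⟨max s t, closure_mono (mflowSet_Ici_antitone F S U (le_max_left s t)),
      closure_mono (mflowSet_Ici_antitone F S U (le_max_right s t))⟩
  obtain ⟨⟨t, ht⟩, hsub⟩ := exists_subset_nhds_of_isCompact hdir
    (fun t => isCompact_closure_mflowSet hS t.2.le U)
    (fun x hx => hW x (iInter_closure_mflowSet_subset_omegaS F S U hx))
  exact ⟨t, ht, hsub⟩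

end DIncl

theorem attractor_eventually_inside_general {n : ℕ}
    (F : (Fin n → ℝ) → Set (Fin n → ℝ))
    (S : Set (Fin n → ℝ)) (hS : IsCompact S)
    (A U : Set (Fin n → ℝ)) (hAU : A ⊆ relInt S U)
    (hA : omegaS F S U = A) :
    ∃ tstar > (0:ℝ), closure (mflowSet F S (Ici tstar) U) ⊆ U := by
  have hnhds : ∀ x ∈ omegaS F S U, {y | y ∈ S → y ∈ U} ∈ 𝓝 x := fun x hx =>
    mem_nhdsWithin_iff_eventually.1 (hAU (hA ▸ hx)).2
  obtain ⟨t, ht, hsub⟩ := exists_closure_mflowSet_subset_of_mem_nhds hS hnhds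
  have hsubS : closure (mflowSet F S (Ici t) U) ⊆ S :=
    closure_minimal (mflowSet_subset (Ici_subset_Ici.2 ht.le) U) hS.isClosed
  exact ⟨t, ht, fun y hy => hsub hy (hsubS hy)⟩

/-- For an attractor `A = ω_S(U)`, some `t* > 0` has `cl (Φ^S([t*,∞),U)) ⊆ U`. -/
theorem attractor_eventually_inside {n : ℕ} (X : Set (Fin n → ℝ)) (hX : IsCompact X)
    (F : (Fin n → ℝ) → Set (Fin n → ℝ)) (hF : FilippovOn F X)
    (S : Set (Fin n → ℝ)) (hSX : S ⊆ X) (hS : IsCompact S) (hSinv : IsInvSet F S)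
    (A U : Set (Fin n → ℝ)) (hUS : U ⊆ S) (hAU : A ⊆ relInt S U)
    (hA : omegaS F S U = A) :
    ∃ tstar > (0:ℝ), closure (mflowSet F S (Ici tstar) U) ⊆ U :=
  attractor_eventually_inside_general F S hS A U hAU hA
end
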